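/- Let μ be a shift-invariant Markov random field satisfying strong spatial mixing (with some vanishing rate f) such that c_μ > 0. Then supp(μ) satisfies topological strong spatial mixing; specifically, TSSM holds with any gap n_0 such that f(n) < c_μ for all n ≥ n_0. -/

import Mathlib

open MeasureTheory

abbrev Site (d : ℕ) := Fin d → ℤ

def dist1 {d : ℕ} (p q : Site d) : ℕ := ∑ i, (p i - q i).natAbs

/-- Outer boundary of a set of sites. -/
def bd {d : ℕ} (S : Set (Site d)) : Set (Site d) :=
  {p | p ∉ S ∧ ∃ q ∈ S, dist1 p q = 1}

/-- Cylinder set: points agreeing with `u` on `S`. -/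
def cyl {d : ℕ} {A : Type*} (S : Set (Site d)) (u : Site d → A) : Set (Site d → A) :=
  {x | ∀ p ∈ S, x p = u p}

noncomputable def condR {d : ℕ} {A : Type*} [MeasurableSpace A]
    (μ : Measure (Site d → A)) (E B : Set (Site d → A)) : ℝ :=
  (μ (E ∩ B) / μ B).toReal

def ShiftInvariant {d : ℕ} {A : Type*} [MeasurableSpace A]
    (μ : Measure (Site d → A)) : Prop :=
  ∀ (t : Site d) (E : Set (Site d → A)),
    μ ((fun (x : Site d → A) (q : Site d) => x (q + t)) ⁻¹' E) = μ E

/-- Markov random field property. -/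
def IsMRF {d : ℕ} {A : Type*} [MeasurableSpace A] (μ : Measure (Site d → A)) : Prop :=
  ∀ S : Set (Site d), S.Finite → ∀ u : Site d → A,
    ∀ T : Set (Site d), T.Finite → bd S ⊆ T → Disjoint S T →
    ∀ δ : Site d → A, 0 < μ (cyl T δ) →
      condR μ (cyl S u) (cyl T δ) = condR μ (cyl S u) (cyl (bd S) δ)

/-- The support of `μ`: points all of whose cylinder sets have positive measure. -/
def mrfSupport {d : ℕ} {A : Type*} [MeasurableSpace A]
    (μ : Measure (Site d → A)) : Set (Site d → A) :=
  {x | ∀ S : Set (Site d), S.Finite → 0 < μ (cyl S x)}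

def TSSM {d : ℕ} {A : Type*} (X : Set (Site d → A)) (g : ℕ) : Prop :=
  ∀ U S V : Set (Site d), U.Finite → S.Finite → V.Finite →
    Disjoint U S → Disjoint S V → Disjoint U V →
    (∀ p ∈ U, ∀ q ∈ V, g ≤ dist1 p q) →
    ∀ u s v : Site d → A,
      (∃ x ∈ X, (∀ p ∈ U, x p = u p) ∧ (∀ p ∈ S, x p = s p)) →
      (∃ x ∈ X, (∀ p ∈ S, x p = s p) ∧ (∀ p ∈ V, x p = v p)) →
      ∃ x ∈ X, (∀ p ∈ U, x p = u p) ∧ (∀ p ∈ S, x p = s p) ∧ ∀ p ∈ V, x p = v p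

/-- ℓ¹ distance between two sets of sites (junk value `0` via `sInf ∅` if one is empty). -/
noncomputable def setD {d : ℕ} (U V : Set (Site d)) : ℕ :=
  sInf {n : ℕ | ∃ p ∈ U, ∃ q ∈ V, dist1 p q = n}

/-- Strong spatial mixing with rate `f`. -/
def SSM {d : ℕ} {A : Type*} [MeasurableSpace A]
    (μ : Measure (Site d → A)) (f : ℕ → ℝ) : Prop :=
  ∀ W : Set (Site d), W.Finite → ∀ U : Set (Site d), U ⊆ W → ∀ u : Site d → A,
    ∀ δ₁ δ₂ : Site d → A, 0 < μ (cyl (bd W) δ₁) → 0 < μ (cyl (bd W) δ₂) →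
      |condR μ (cyl U u) (cyl (bd W) δ₁) - condR μ (cyl U u) (cyl (bd W) δ₂)| ≤
        (U.ncard : ℝ) * f (setD U {p ∈ bd W | δ₁ p ≠ δ₂ p})

/-! TSSM is obtained by gluing the sites `p` of `U` one at a time. Given `x` in the support with
the right values at `p` and on `S`, and `y` with the right values on `S` and `V`, let `W` be the
ball of radius `n₀` around `p` minus `S ∪ V`. On `∂W`, `x` and `y` differ only at distance
`≥ n₀` from `p`, so by SSM the conditional probability of `x p` given `y` on `∂W` is at least
`c - f m > 0` for some `m ≥ n₀` (shift invariance moves the bound `c` from `0` to `p`).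
Some pattern on `W` with the value `x p` at `p` then has positive probability given `y` on
`∂W`; by the Markov property it keeps positive probability when `y` is imposed on all of
`S ∪ V` as well, and any point of the support in that cylinder glues `x p` to `y`. -/

namespace Site

variable {d : ℕ}

lemma dist1_comm (p q : Site d) : dist1 p q = dist1 q p :=
  Finset.sum_congr rfl fun i _ => by rw [← Int.natAbs_neg, neg_sub]

@[simp]
lemma dist1_self (p : Site d) : dist1 p p = 0 := by
  simp [dist1]

lemma finite_setOf_dist1_le (c : Site d) (r : ℕ) : {x : Site d | dist1 x c ≤ r}.Finite := by
  refine (Set.Finite.pi fun i => Set.finite_Icc (c i - r) (c i + r)).subset ?_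
  intro x hx i _
  have hi : (x i - c i).natAbs ≤ r :=
    (Finset.single_le_sum (fun j _ => Nat.zero_le ((x j - c j).natAbs))
      (Finset.mem_univ i)).trans hx
  have := abs_le.mp (Int.abs_eq_natAbs _ ▸ (Int.ofNat_le.mpr hi))
  constructor <;> linarith [this.1, this.2]

lemma finite_bd {W : Set (Site d)} (hW : W.Finite) : (bd W).Finite := by
  refine (hW.biUnion fun q _ => finite_setOf_dist1_le q 1).subset ?_
  rintro p ⟨-, q, hq, hpq⟩
  exact Set.mem_biUnion hq hpq.le

lemma exists_setD_singleton_eq (p : Site d) {T : Set (Site d)} (hT : T.Nonempty) :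
    ∃ q ∈ T, setD {p} T = dist1 p q := by
  obtain ⟨q, hq⟩ := hT
  obtain ⟨_, rfl, q', hq', hd⟩ := Nat.sInf_mem (s := {n | ∃ a ∈ ({p} : Set (Site d)),
    ∃ q ∈ T, dist1 a q = n}) ⟨dist1 p q, p, rfl, q, hq, rfl⟩
  exact ⟨q', hq', hd.symm⟩

end Site

open Site

section Cylinders

variable {d : ℕ} {A : Type*}

lemma cyl_congr {S : Set (Site d)} {u v : Site d → A} (h : Set.EqOn u v S) :
    cyl S u = cyl S v := by
  ext z
  exact forall₂_congr fun p hp => by rw [h hp]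

lemma cyl_eq_preimage_domRestrict (S : Set (Site d)) (u : Site d → A) :
    cyl S u = (S.domRestrict : (Site d → A) → S → A) ⁻¹' {S.domRestrict u} := by
  ext z
  simp only [Set.mem_preimage, Set.mem_singleton_iff, Set.domRestrict_eq_domRestrict_iff]
  rfl

variable [MeasurableSpace A] {μ : Measure (Site d → A)}

lemma condR_pos_iff [IsFiniteMeasure μ] {E B : Set (Site d → A)} (hB : 0 < μ B) :
    0 < condR μ E B ↔ 0 < μ (E ∩ B) := by
  rw [condR, ENNReal.toReal_pos_iff, ENNReal.div_pos_iff, pos_iff_ne_zero]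
  exact ⟨fun h => h.1.1, fun h => ⟨⟨h, measure_ne_top μ B⟩,
    ENNReal.div_lt_top (measure_ne_top μ _) hB.ne'⟩⟩

end Cylinders

section Shift

variable {d : ℕ} {A : Type*}

def shift (t : Site d) (x : Site d → A) : Site d → A := fun q => x (q + t)

lemma preimage_shift_cyl (t : Site d) (S : Set (Site d)) (x : Site d → A) :
    shift t ⁻¹' cyl S (shift t x) = cyl ((· + t) '' S) x := by
  ext z
  simp only [cyl, Set.mem_preimage, Set.mem_ofPred_eq, shift, Set.forall_mem_image]

variable [MeasurableSpace A] {μ : Measure (Site d → A)}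

lemma ShiftInvariant.measure_preimage_shift (hinv : ShiftInvariant μ) (t : Site d)
    (E : Set (Site d → A)) : μ (shift t ⁻¹' E) = μ E :=
  hinv t E

lemma ShiftInvariant.shift_mem_mrfSupport (hinv : ShiftInvariant μ) {x : Site d → A}
    (hx : x ∈ mrfSupport μ) (t : Site d) : shift t x ∈ mrfSupport μ := fun S hS => by
  rw [← hinv.measure_preimage_shift t, preimage_shift_cyl]
  exact hx _ (hS.image _)

lemma ShiftInvariant.condR_shift (hinv : ShiftInvariant μ) (t : Site d) (S T : Set (Site d))
    (x : Site d → A) :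
    condR μ (cyl S (shift t x)) (cyl T (shift t x)) =
      condR μ (cyl ((· + t) '' S) x) (cyl ((· + t) '' T) x) := by
  rw [condR, condR, ← hinv.measure_preimage_shift t, ← hinv.measure_preimage_shift t (cyl T _),
    Set.preimage_inter, preimage_shift_cyl, preimage_shift_cyl]

lemma ShiftInvariant.le_condR_singleton (hinv : ShiftInvariant μ) {c : ℝ}
    (hcb : ∀ x ∈ mrfSupport μ, ∀ S : Set (Site d), S.Finite → (0 : Site d) ∉ S →
      c ≤ condR μ (cyl {(0 : Site d)} x) (cyl S x))
    {x : Site d → A} (hx : x ∈ mrfSupport μ) {p : Site d} {S : Set (Site d)}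
    (hS : S.Finite) (hpS : p ∉ S) :
    c ≤ condR μ (cyl {p} x) (cyl S x) := by
  have h := hcb (shift p x) (hinv.shift_mem_mrfSupport hx p) ((· + p) ⁻¹' S)
    (hS.preimage (add_left_injective p).injOn) (by simpa using hpS)
  rwa [hinv.condR_shift, Set.image_singleton, zero_add,
    Set.image_preimage_eq _ (add_right_surjective p)] at h

end Shift

section Support

variable {d : ℕ} {A : Type*} [Countable A] [MeasurableSpace A] {μ : Measure (Site d → A)}

lemma measure_setOf_cyl_inter_null {F : Set (Site d)} (hF : F.Finite) (E : Set (Site d → A)) :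
    μ {x ∈ E | μ (cyl F x ∩ E) = 0} = 0 := by
  have := hF.to_subtype
  set N := {g : F → A | μ ((F.domRestrict : (Site d → A) → F → A) ⁻¹' {g} ∩ E) = 0}
  refine measure_mono_null (t := ⋃ g ∈ N, F.domRestrict ⁻¹' {g} ∩ E) ?_
    ((measure_biUnion_null_iff N.to_countable).mpr fun g hg => hg)
  rintro x ⟨hxE, hx⟩
  refine Set.mem_biUnion (x := F.domRestrict x) ?_ ⟨rfl, hxE⟩
  show μ _ = 0
  rwa [← cyl_eq_preimage_domRestrict]

lemma exists_measure_cyl_inter_pos {F : Set (Site d)} (hF : F.Finite) {E : Set (Site d → A)}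
    (hE : 0 < μ E) : ∃ w ∈ E, 0 < μ (cyl F w ∩ E) := by
  by_contra! h
  refine hE.ne' (measure_mono_null (fun x hx => ?_) (measure_setOf_cyl_inter_null hF E))
  exact ⟨hx, nonpos_iff_eq_zero.mp (h x hx)⟩

lemma measure_compl_mrfSupport : μ (mrfSupport μ)ᶜ = 0 := by
  have hcompl : (mrfSupport μ)ᶜ =
      ⋃ F : Finset (Site d), {x | μ (cyl (F : Set (Site d)) x) = 0} := by
    ext x
    simp only [mrfSupport, Set.mem_compl_iff, Set.mem_ofPred_eq, Set.mem_iUnion, not_forall,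
      not_lt, nonpos_iff_eq_zero, exists_prop]
    exact ⟨fun ⟨S, hS, h⟩ => ⟨hS.toFinset, by simpa using h⟩,
      fun ⟨F, h⟩ => ⟨F, F.finite_toSet, h⟩⟩
  rw [hcompl, measure_iUnion_null_iff]
  intro F
  simpa using measure_setOf_cyl_inter_null (μ := μ) F.finite_toSet Set.univ

lemma exists_mem_inter_mrfSupport {E : Set (Site d → A)} (hE : 0 < μ E) :
    (E ∩ mrfSupport μ).Nonempty :=
  nonempty_of_measure_ne_zero (by rw [measure_inter_conull measure_compl_mrfSupport]; exact hE.ne')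

end Support

section Mixing

variable {d : ℕ} {A : Type*} [MeasurableSpace A] {μ : Measure (Site d → A)} [IsFiniteMeasure μ]

lemma IsMRF.measure_cyl_inter_pos (hmrf : IsMRF μ) {W T : Set (Site d)} (hW : W.Finite)
    (hT : T.Finite) (hWT : bd W ⊆ T) (hdisj : Disjoint W T) {u y : Site d → A}
    (hy : 0 < μ (cyl T y)) (hpos : 0 < μ (cyl W u ∩ cyl (bd W) y)) :
    0 < μ (cyl W u ∩ cyl T y) := by
  have hbd : 0 < μ (cyl (bd W) y) := hy.trans_le (measure_mono fun z hz p hp => hz p (hWT hp))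
  rw [← condR_pos_iff hy, hmrf W hW u T hT hWT hdisj y hy]
  exact (condR_pos_iff hbd).mpr hpos

lemma SSM.measure_cyl_singleton_inter_pos {f : ℕ → ℝ} (hssm : SSM μ f) {W : Set (Site d)}
    (hW : W.Finite) {p : Site d} (hpW : p ∈ W) {x y : Site d → A}
    (hx : 0 < μ (cyl (bd W) x)) (hy : 0 < μ (cyl (bd W) y)) {c : ℝ} (hc : 0 < c)
    (hcx : c ≤ condR μ (cyl {p} x) (cyl (bd W) x))
    (hfar : ∀ q ∈ bd W, x q ≠ y q → f (dist1 p q) < c) :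
    0 < μ (cyl {p} x ∩ cyl (bd W) y) := by
  rw [← condR_pos_iff hy]
  -- without disagreements `setD` is the junk value `0`, so SSM says nothing there
  rcases Set.eq_empty_or_nonempty {q ∈ bd W | x q ≠ y q} with hagree | hdiff
  · have hxy : cyl (bd W) x = cyl (bd W) y :=
      cyl_congr fun q hq => by_contra fun hne => hagree.subset ⟨hq, hne⟩
    rw [← hxy]
    linarith
  · obtain ⟨q, ⟨hq, hne⟩, hdist⟩ := exists_setD_singleton_eq p hdiff
    have hmix := hssm W hW {p} (Set.singleton_subset_iff.mpr hpW) x x y hx hy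
    rw [Set.ncard_singleton, Nat.cast_one, one_mul, hdist] at hmix
    linarith [(le_abs_self _).trans hmix, hfar q hq hne]

end Mixing

section Extension

variable {d : ℕ} {A : Type*}

/-- `TSSM` for `U = {p}`, phrased with the two witnesses `x` (for `p` and `S`) and `y`
(for `S` and `V`). -/
def SingleSiteTSSM (X : Set (Site d → A)) (g : ℕ) : Prop :=
  ∀ (p : Site d) (S V : Set (Site d)), S.Finite → V.Finite → p ∉ S → p ∉ V →
    (∀ q ∈ V, g ≤ dist1 p q) → ∀ x ∈ X, ∀ y ∈ X, (∀ q ∈ S, x q = y q) →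
      ∃ z ∈ X, z p = x p ∧ ∀ q ∈ S ∪ V, z q = y q

theorem SingleSiteTSSM.tssm {X : Set (Site d → A)} {g : ℕ} (hX : SingleSiteTSSM X g) :
    TSSM X g := by
  intro U S V hU hS hV hUS _ hUV hdist u s v ⟨x, hx, hxU, hxS⟩ ⟨y, hy, hyS, hyV⟩
  suffices ∃ z ∈ X, (∀ q ∈ U ∪ S, z q = x q) ∧ ∀ q ∈ V, z q = y q by
    obtain ⟨z, hz, hzx, hzy⟩ := this
    exact ⟨z, hz, fun q hq => (hzx q (.inl hq)).trans (hxU q hq),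
      fun q hq => (hzx q (.inr hq)).trans (hxS q hq), fun q hq => (hzy q hq).trans (hyV q hq)⟩
  refine Set.Finite.induction_on_subset
    (motive := fun U' _ => ∃ z ∈ X, (∀ q ∈ U' ∪ S, z q = x q) ∧ ∀ q ∈ V, z q = y q) U hU ?_ ?_
  · refine ⟨y, hy, fun q hq => ?_, fun _ _ => rfl⟩
    rw [Set.empty_union] at hq
    exact (hyS q hq).trans (hxS q hq).symm
  · rintro p U' hpU hU'U hpU' ⟨z, hz, hzx, hzy⟩
    obtain ⟨w, hw, hwp, hwz⟩ := hX p (U' ∪ S) V ((hU.subset hU'U).union hS) hV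
      (by rintro (h | h); exacts [hpU' h, Set.disjoint_left.mp hUS hpU h])
      (Set.disjoint_left.mp hUV hpU) (hdist p hpU) x hx z hz fun q hq => (hzx q hq).symm
    refine ⟨w, hw, ?_, fun q hq => (hwz q (.inr hq)).trans (hzy q hq)⟩
    rintro q ((rfl | hq) | hq)
    · exact hwp
    · exact (hwz q (.inl (.inl hq))).trans (hzx q (.inl hq))
    · exact (hwz q (.inl (.inr hq))).trans (hzx q (.inr hq))

end Extension

theorem singleSiteTSSM_mrfSupport {d : ℕ} {A : Type*} [Countable A] [MeasurableSpace A]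
    {μ : Measure (Site d → A)} [IsFiniteMeasure μ] (hmrf : IsMRF μ) {f : ℕ → ℝ}
    (hssm : SSM μ f) {c : ℝ} (hc : 0 < c)
    (hcb : ∀ x ∈ mrfSupport μ, ∀ (p : Site d) (S : Set (Site d)), S.Finite → p ∉ S →
      c ≤ condR μ (cyl {p} x) (cyl S x))
    {g : ℕ} (hg : ∀ n, g ≤ n → f n < c) :
    SingleSiteTSSM (mrfSupport μ) g := by
  intro p S V hS hV hpS hpV hdist x hx y hy hxy
  set W := {q | dist1 q p ≤ g} \ (S ∪ V)
  have hW : W.Finite := (finite_setOf_dist1_le p g).sdiff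
  have hpW : p ∈ W := ⟨by simp, by rintro (h | h); exacts [hpS h, hpV h]⟩
  have hfar : ∀ q ∈ bd W, x q ≠ y q → f (dist1 p q) < c := by
    rintro q ⟨hqW, -⟩ hne
    refine hg _ ?_
    by_cases hqV : q ∈ V
    · exact hdist q hqV
    rw [dist1_comm]
    by_contra! hlt
    exact hqW ⟨hlt.le, by rintro (h | h); exacts [hne (hxy q h), hqV h]⟩
  have hbd := finite_bd hW
  obtain ⟨w, hwE, hw⟩ := exists_measure_cyl_inter_pos hW <|
    hssm.measure_cyl_singleton_inter_pos hW hpW (hx _ hbd) (hy _ hbd) hc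
      (hcb x hx p (bd W) hbd fun h => h.1 hpW) hfar
  have hT : (bd W ∪ (S ∪ V)).Finite := hbd.union (hS.union hV)
  have hdisj : Disjoint W (bd W ∪ (S ∪ V)) :=
    Set.disjoint_union_right.mpr
      ⟨Set.disjoint_left.mpr fun q hq h => h.1 hq, Set.disjoint_sdiff_left⟩
  obtain ⟨z, ⟨hzW, hzT⟩, hz⟩ := exists_mem_inter_mrfSupport <|
    hmrf.measure_cyl_inter_pos hW hT Set.subset_union_left hdisj (hy _ hT) <|
      hw.trans_le (measure_mono (Set.inter_subset_inter_right _ Set.inter_subset_right))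
  exact ⟨z, hz, (hzW p hpW).trans (hwE.1 p rfl), fun q hq => hzT q (.inr hq)⟩

theorem ssm_cmu_pos_implies_tssm_general {d : ℕ} {A : Type*} [Fintype A] [MeasurableSpace A]
    (μ : Measure (Site d → A)) [IsProbabilityMeasure μ]
    (hinv : ShiftInvariant μ) (hmrf : IsMRF μ)
    (f : ℕ → ℝ)
    (hssm : SSM μ f)
    (c : ℝ) (hc : 0 < c)
    (hcb : ∀ x ∈ mrfSupport μ, ∀ S : Set (Site d), S.Finite → (0 : Site d) ∉ S →
      c ≤ condR μ (cyl {(0 : Site d)} x) (cyl S x))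
    (n₀ : ℕ) (hn₀ : ∀ n, n₀ ≤ n → f n < c) :
    TSSM (mrfSupport μ) n₀ :=
  (singleSiteTSSM_mrfSupport hmrf hssm hc
    (fun _ hx _ _ hS hpS => hinv.le_condR_singleton hcb hx hS hpS) hn₀).tssm

/-- If a shift-invariant MRF satisfies SSM with a vanishing rate `f` and `c_μ > 0`
(witnessed by a positive uniform lower bound `c` on the conditional probabilities),
then its support satisfies TSSM with any gap `n₀` such that `f n < c` for all `n ≥ n₀`. -/
theorem ssm_cmu_pos_implies_tssm {d : ℕ} {A : Type*} [Fintype A] [MeasurableSpace A]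
    (μ : Measure (Site d → A)) [IsProbabilityMeasure μ]
    (hinv : ShiftInvariant μ) (hmrf : IsMRF μ)
    (f : ℕ → ℝ) (hf0 : ∀ n, 0 ≤ f n)
    (hftend : Filter.Tendsto f Filter.atTop (nhds 0))
    (hssm : SSM μ f)
    (c : ℝ) (hc : 0 < c)
    (hcb : ∀ x ∈ mrfSupport μ, ∀ S : Set (Site d), S.Finite → (0 : Site d) ∉ S →
      c ≤ condR μ (cyl {(0 : Site d)} x) (cyl S x))
    (n₀ : ℕ) (hn₀ : ∀ n, n₀ ≤ n → f n < c) :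
    TSSM (mrfSupport μ) n₀ :=
  ssm_cmu_pos_implies_tssm_general μ hinv hmrf f hssm c hc hcb n₀ hn₀
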